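/- Let S be a set of clusterings of X into Fin k, each of which co-clusters at least one pair and separates at least one pair, and suppose Θ* ∈ S is Pareto optimal with respect to minimizing λ⁻ and maximizing λ⁺ (there is no Θ ∈ S with λ⁻(Θ) ≤ λ⁻(Θ*) and λ⁺(Θ) ≥ λ⁺(Θ*) with at least one inequality strict). Then there is no Θ ∈ S with MD(Θ) ≤ MD(Θ*) and MS(Θ) > MS(Θ*) + ε. -/
import Mathlib


variable {α : Type*}

/-- A pair is an ordered pair of distinct points of `X`. -/
def IsPair (X : Finset α) (p : α × α) : Prop :=
  p.1 ∈ X ∧ p.2 ∈ X ∧ p.1 ≠ p.2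

/-- The pairs of distinct points of `X` co-clustered by `Θ`. -/
def coPairs [DecidableEq α] {k : ℕ} (X : Finset α) (Θ : α → Fin k) : Finset (α × α) :=
  (X ×ˢ X).filter fun p => p.1 ≠ p.2 ∧ Θ p.1 = Θ p.2

/-- The pairs of distinct points of `X` separated by `Θ`. -/
def sepPairs [DecidableEq α] {k : ℕ} (X : Finset α) (Θ : α → Fin k) : Finset (α × α) :=
  (X ×ˢ X).filter fun p => p.1 ≠ p.2 ∧ Θ p.1 ≠ Θ p.2

/-- Maximum diameter: maximum distance over co-clustered pairs. -/
noncomputable def MD [MetricSpace α] [DecidableEq α] {k : ℕ} (X : Finset α) (Θ : α → Fin k)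
    (h : (coPairs X Θ).Nonempty) : ℝ :=
  (coPairs X Θ).sup' h fun p => dist p.1 p.2

/-- Minimum split: minimum distance over separated pairs. -/
noncomputable def MS [MetricSpace α] [DecidableEq α] {k : ℕ} (X : Finset α) (Θ : α → Fin k)
    (h : (sepPairs X Θ).Nonempty) : ℝ :=
  (sepPairs X Θ).inf' h fun p => dist p.1 p.2

/-- `λ⁻(Θ)`: the distance class of a co-clustered pair of maximal distance
(equivalently, under monotonicity of `w`, the largest class of a co-clustered pair). -/
def lamMinus [DecidableEq α] {k : ℕ} (X : Finset α) (w : α × α → ℕ) (Θ : α → Fin k)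
    (h : (coPairs X Θ).Nonempty) : ℕ :=
  (coPairs X Θ).sup' h w

/-- `λ⁺(Θ)`: the distance class of a separated pair of minimal distance
(equivalently, under monotonicity of `w`, the smallest class of a separated pair). -/
def lamPlus [DecidableEq α] {k : ℕ} (X : Finset α) (w : α × α → ℕ) (Θ : α → Fin k)
    (h : (sepPairs X Θ).Nonempty) : ℕ :=
  (sepPairs X Θ).inf' h w


lemma mem_coPairs_isPair [DecidableEq α] {k : ℕ} {X : Finset α} {Θ : α → Fin k}
    {p : α × α} (hp : p ∈ coPairs X Θ) : IsPair X p := by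
  simp only [coPairs, Finset.mem_filter, Finset.mem_product] at hp
  exact ⟨hp.1.1, hp.1.2, hp.2.1⟩

lemma mem_sepPairs_isPair [DecidableEq α] {k : ℕ} {X : Finset α} {Θ : α → Fin k}
    {p : α × α} (hp : p ∈ sepPairs X Θ) : IsPair X p := by
  simp only [sepPairs, Finset.mem_filter, Finset.mem_product] at hp
  exact ⟨hp.1.1, hp.1.2, hp.2.1⟩

/-- For a `λ`-Pareto optimal clustering `Θ*`, no clustering in `S` improves
`MS` by more than `ε` without worsening `MD`. -/
theorem no_ms_improvement [MetricSpace α] [DecidableEq α]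
    (X : Finset α) (hX : X.Nonempty) (ε : ℝ) (hε : 0 ≤ ε) (w : α × α → ℕ)
    (hmono : ∀ p q : α × α, IsPair X p → IsPair X q →
      dist p.1 p.2 ≤ dist q.1 q.2 → w p ≤ w q)
    (hspread : ∀ p q : α × α, IsPair X p → IsPair X q →
      w p = w q → dist q.1 q.2 ≤ dist p.1 p.2 + ε)
    {k : ℕ} (hk : 1 ≤ k)
    (S : Set (α → Fin k))
    (hSco : ∀ Θ ∈ S, (coPairs X Θ).Nonempty)
    (hSsep : ∀ Θ ∈ S, (sepPairs X Θ).Nonempty)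
    (Θstar : α → Fin k) (hstar : Θstar ∈ S)
    (hpareto : ¬ ∃ Θ, ∃ hΘ : Θ ∈ S,
      lamMinus X w Θ (hSco Θ hΘ) ≤ lamMinus X w Θstar (hSco Θstar hstar) ∧
      lamPlus X w Θstar (hSsep Θstar hstar) ≤ lamPlus X w Θ (hSsep Θ hΘ) ∧
      (lamMinus X w Θ (hSco Θ hΘ) < lamMinus X w Θstar (hSco Θstar hstar) ∨
        lamPlus X w Θstar (hSsep Θstar hstar) < lamPlus X w Θ (hSsep Θ hΘ))) :
    ¬ ∃ Θ, ∃ hΘ : Θ ∈ S,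
      MD X Θ (hSco Θ hΘ) ≤ MD X Θstar (hSco Θstar hstar) ∧
      MS X Θstar (hSsep Θstar hstar) + ε < MS X Θ (hSsep Θ hΘ) := by

  intro ⟨Θ, hΘ, hMD, hMS⟩
  apply hpareto
  -- pair achieving MD(Θ*)
  obtain ⟨pstar, hpstar, hpd⟩ := Finset.exists_mem_eq_sup' (hSco Θstar hstar)
    (fun p : α × α => dist p.1 p.2)
  -- pair achieving MS(Θ*)
  obtain ⟨qstar, hqstar, hqd⟩ := Finset.exists_mem_eq_inf' (hSsep Θstar hstar)
    (fun p : α × α => dist p.1 p.2)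
  -- pair achieving λ⁺(Θ)
  obtain ⟨q1, hq1, hq1w⟩ := Finset.exists_mem_eq_inf' (hSsep Θ hΘ) w
  have hlamMinus : lamMinus X w Θ (hSco Θ hΘ) ≤ lamMinus X w Θstar (hSco Θstar hstar) := by
    apply Finset.sup'_le
    intro p hp
    have h1 : dist p.1 p.2 ≤ dist pstar.1 pstar.2 := by
      calc dist p.1 p.2 ≤ MD X Θ (hSco Θ hΘ) := Finset.le_sup' (fun p : α × α => dist p.1 p.2) hp
        _ ≤ MD X Θstar (hSco Θstar hstar) := hMD
        _ = dist pstar.1 pstar.2 := hpd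
    exact le_trans (hmono p pstar (mem_coPairs_isPair hp) (mem_coPairs_isPair hpstar) h1)
      (Finset.le_sup' w hpstar)
  have hqd1 : dist qstar.1 qstar.2 + ε < dist q1.1 q1.2 := by
    calc dist qstar.1 qstar.2 + ε = MS X Θstar (hSsep Θstar hstar) + ε := by simp only [MS]; rw [hqd]
      _ < MS X Θ (hSsep Θ hΘ) := hMS
      _ ≤ dist q1.1 q1.2 := Finset.inf'_le (fun p : α × α => dist p.1 p.2) hq1
  have hw1 : w qstar ≤ w q1 :=
    hmono qstar q1 (mem_sepPairs_isPair hqstar) (mem_sepPairs_isPair hq1)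
      (le_of_lt (lt_of_le_of_lt (le_add_of_nonneg_right hε) hqd1))
  have hw2 : w qstar ≠ w q1 := by
    intro h
    exact absurd (hspread qstar q1 (mem_sepPairs_isPair hqstar) (mem_sepPairs_isPair hq1) h)
      (not_le.mpr hqd1)
  have hlamPlus : lamPlus X w Θstar (hSsep Θstar hstar) < lamPlus X w Θ (hSsep Θ hΘ) := by
    calc lamPlus X w Θstar (hSsep Θstar hstar) ≤ w qstar := Finset.inf'_le _ hqstar
      _ < w q1 := lt_of_le_of_ne hw1 hw2
      _ = lamPlus X w Θ (hSsep Θ hΘ) := hq1w.symm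
  exact ⟨Θ, hΘ, hlamMinus, le_of_lt hlamPlus, Or.inr hlamPlus⟩
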